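/- arXiv:1604.02196 — 6 statements merged into one kernel-verified Lean document; each statement's English description precedes it below -/
import Mathlib

section
/- Ultraroots preserve modal validity: if a modal formula A is valid in the ultrapower F^U of a frame F modulo an ultrafilter U, then A is valid in F. -/
inductive ModalFormula (α : Type) : Type
  | var : α → ModalFormula α
  | falsum : ModalFormula α
  | imp : ModalFormula α → ModalFormula α → ModalFormula α
  | box : ModalFormula α → ModalFormula α

def Truth {α X : Type} (R : X → X → Prop) (V : α → Set X) : X → ModalFormula α → Prop
  | w, .var p => w ∈ V p
  | _, .falsum => False
  | w, .imp A B => Truth R V w A → Truth R V w B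
  | w, .box A => ∀ v, R w v → Truth R V v A

def Valid {α X : Type} (R : X → X → Prop) (A : ModalFormula α) : Prop :=
  ∀ (V : α → Set X) (w : X), Truth R V w A

def uprodSetoid {I : Type} (X : I → Type) (U : Ultrafilter I) : Setoid (∀ i, X i) where
  r f g := {i | f i = g i} ∈ U
  iseqv := by
    refine ⟨fun f => Filter.univ_mem' fun i => rfl, fun {f g} h => ?_, fun {f g h} h1 h2 => ?_⟩
    · exact Filter.mem_of_superset h fun i hi => hi.symm
    · exact Filter.mem_of_superset (Filter.inter_mem h1 h2) fun i hi => hi.1.trans hi.2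

def UProd {I : Type} (X : I → Type) (U : Ultrafilter I) : Type :=
  Quotient (uprodSetoid X U)

def UProd.mk {I : Type} {X : I → Type} {U : Ultrafilter I} (f : ∀ i, X i) : UProd X U :=
  Quotient.mk (uprodSetoid X U) f

def UProdRel {I : Type} {X : I → Type} (R : ∀ i, X i → X i → Prop) (U : Ultrafilter I) :
    UProd X U → UProd X U → Prop :=
  Quotient.lift₂ (fun f g => {i | R i (f i) (g i)} ∈ U)
    (by
      intro f g f' g' hf hg
      have hf' : {i | f i = f' i} ∈ U := hf
      have hg' : {i | g i = g' i} ∈ U := hg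
      refine propext ⟨fun h => ?_, fun h => ?_⟩
      · refine Filter.mem_of_superset (Filter.inter_mem (Filter.inter_mem h hf') hg')
          fun i hi => ?_
        obtain ⟨⟨h1, h2⟩, h3⟩ := hi
        simp only [Set.mem_setOf_eq] at *
        rw [← h2, ← h3]; exact h1
      · refine Filter.mem_of_superset (Filter.inter_mem (Filter.inter_mem h hf') hg')
          fun i hi => ?_
        obtain ⟨⟨h1, h2⟩, h3⟩ := hi
        simp only [Set.mem_setOf_eq] at *
        rw [h2, h3]; exact h1)

def UProdVal {I : Type} {X : I → Type} {α : Type} (V : ∀ i, α → Set (X i)) (U : Ultrafilter I) :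
    α → Set (UProd X U) := fun p =>
  {x | Quotient.liftOn x (fun f => {i | f i ∈ V i p} ∈ U)
    (by
      intro f g hfg
      have hfg' : {i | f i = g i} ∈ U := hfg
      refine propext ⟨fun h => ?_, fun h => ?_⟩
      · refine Filter.mem_of_superset (Filter.inter_mem h hfg') fun i hi => ?_
        obtain ⟨h1, h2⟩ := hi
        simp only [Set.mem_setOf_eq] at *
        rw [← h2]; exact h1
      · refine Filter.mem_of_superset (Filter.inter_mem h hfg') fun i hi => ?_
        obtain ⟨h1, h2⟩ := hi
        simp only [Set.mem_setOf_eq] at *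
        rw [h2]; exact h1)}

/-- The ultrapower of a frame: the ultraproduct of the constant family. -/
abbrev UPow (X : Type) {I : Type} (U : Ultrafilter I) : Type := UProd (fun _ : I => X) U

open Classical in
/-- Łoś's theorem for modal formulas in ultrapowers. -/
theorem los_modal {α X I : Type} (R : X → X → Prop) (U : Ultrafilter I)
    (V : α → Set X) (A : ModalFormula α) (f : I → X) :
    Truth (UProdRel (fun _ : I => R) U) (UProdVal (fun _ : I => V) U) (UProd.mk f) A ↔
      {i | Truth R V (f i) A} ∈ U := by
  induction A generalizing f with
  | var p => exact Iff.rfl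
  | falsum =>
    simp only [Truth, Set.setOf_false]
    exact ⟨False.elim, fun h => (Filter.empty_notMem (U : Filter I) h).elim⟩
  | imp A B ihA ihB =>
    simp only [Truth, ihA, ihB]
    constructor
    · intro h
      by_cases hA : {i | Truth R V (f i) A} ∈ U
      · exact Filter.mem_of_superset (h hA) fun i hi _ => hi
      · rw [← Ultrafilter.compl_mem_iff_notMem] at hA
        exact Filter.mem_of_superset hA fun i hi hA' => absurd hA' hi
    · intro h hA
      exact Filter.mem_of_superset (Filter.inter_mem h hA) fun i ⟨h1, h2⟩ => h1 h2
  | box A ih =>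
    constructor
    · intro h
      by_contra hS
      rw [← Ultrafilter.compl_mem_iff_notMem] at hS
      have hS' : {i | ∃ v, R (f i) v ∧ ¬ Truth R V v A} ∈ U := by
        refine Filter.mem_of_superset hS fun i hi => ?_
        simp only [Set.mem_compl_iff, Set.mem_setOf_eq, Truth, not_forall] at hi ⊢
        obtain ⟨v, hv, hnv⟩ := hi
        exact ⟨v, hv, hnv⟩
      set g : I → X := fun i =>
        if hi : ∃ v, R (f i) v ∧ ¬ Truth R V v A then hi.choose else f i with hg
      have hRg : {i | R (f i) (g i)} ∈ U :=
        Filter.mem_of_superset hS' fun i hi => by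
          have : g i = hi.choose := dif_pos hi
          simp only [Set.mem_setOf_eq, this]; exact hi.choose_spec.1
      have hng : {i | ¬ Truth R V (g i) A} ∈ U :=
        Filter.mem_of_superset hS' fun i hi => by
          have : g i = hi.choose := dif_pos hi
          simp only [Set.mem_setOf_eq, this]; exact hi.choose_spec.2
      have := h (UProd.mk g) hRg
      rw [ih] at this
      have := Filter.inter_mem this hng
      obtain ⟨i, h1, h2⟩ := Ultrafilter.nonempty_of_mem this
      exact h2 h1
    · intro hS x hR
      induction x using Quotient.ind with
      | _ g =>
        rw [show Quotient.mk _ g = UProd.mk (U := U) g from rfl, ih]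
        have hRg : {i | R (f i) (g i)} ∈ U := hR
        refine Filter.mem_of_superset (Filter.inter_mem hS hRg) fun i ⟨h1, h2⟩ => ?_
        exact h1 _ h2

/-- Ultraroots preserve modal validity: if `A` is valid in the ultrapower
`F^U` of the frame `F = (X, R)` modulo an ultrafilter `U`, then `A` is valid
in `F` itself. -/
theorem valid_of_valid_ultrapower {α X I : Type} (R : X → X → Prop)
    (U : Ultrafilter I) (A : ModalFormula α)
    (h : Valid (UProdRel (fun _ : I => R) U) A) :
    Valid R A := by
  intro V w
  have := h (UProdVal (fun _ : I => V) U) (UProd.mk fun _ => w)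
  rw [los_modal] at this
  by_contra hn
  simp only [hn, Set.setOf_false] at this
  exact Filter.empty_notMem (U : Filter I) this
end

section
/- Łoś's theorem for Kripke models: given models M_i on frames F_i and an ultrafilter U on I, in the ultraproduct model ∏_U M_i a formula A is true at f_U if and only if {i ∈ I : A is true at f(i) in M_i} ∈ U. -/
theorem Filter.forall_eventually_iff_eventually_forall {I : Type*} {X : I → Type*}
    [Nonempty (∀ i, X i)] (l : Filter I) (S : ∀ i, X i → Prop) :
    (∀ g : ∀ i, X i, ∀ᶠ i in l, S i (g i)) ↔ ∀ᶠ i in l, ∀ x, S i x := by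
  refine ⟨fun h => ?_, fun h g => h.mono fun i hi => hi (g i)⟩
  obtain ⟨g₀⟩ := ‹Nonempty (∀ i, X i)›
  -- Drinker paradox in each factor: a counterexample to `S i` if there is one.
  have drinker : ∀ i, ∃ x, S i x → ∀ y, S i y := fun i => by
    by_cases hall : ∀ y, S i y
    · exact ⟨g₀ i, fun _ => hall⟩
    · obtain ⟨x, hx⟩ := not_forall.mp hall
      exact ⟨x, fun hx' => (hx hx').elim⟩
  choose g hg using drinker
  exact (h g).mono hg

section UProd

variable {I : Type} {X : I → Type} {U : Ultrafilter I}

theorem UProd.forall_mk {P : UProd X U → Prop} : (∀ x, P x) ↔ ∀ f, P (UProd.mk f) :=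
  Quotient.forall

theorem UProdRel_mk_mk (R : ∀ i, X i → X i → Prop) (f g : ∀ i, X i) :
    UProdRel R U (UProd.mk f) (UProd.mk g) ↔ ∀ᶠ i in U, R i (f i) (g i) :=
  Iff.rfl

theorem UProd.mk_mem_UProdVal {α : Type} (V : ∀ i, α → Set (X i)) (f : ∀ i, X i) (p : α) :
    UProd.mk f ∈ UProdVal V U p ↔ ∀ᶠ i in U, f i ∈ V i p :=
  Iff.rfl

end UProd

/-- Łoś's theorem for Kripke models: in the ultraproduct of the models
`M i = (X i, R i, V i)` modulo the ultrafilter `U`, a formula `A` is true at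
`f_U` iff `A` is true at `f i` in `M i` for `U`-almost all `i`. -/
theorem los_kripke {α I : Type} {X : I → Type} (R : ∀ i, X i → X i → Prop)
    (V : ∀ i, α → Set (X i)) (U : Ultrafilter I) (f : ∀ i, X i)
    (A : ModalFormula α) :
    Truth (UProdRel R U) (UProdVal V U) (UProd.mk f) A ↔
      {i | Truth (R i) (V i) (f i) A} ∈ U := by
  have : Nonempty (∀ i, X i) := ⟨f⟩
  induction A generalizing f with
  | var p => exact UProd.mk_mem_UProdVal V f p
  | falsum => exact ⟨False.elim, U.empty_notMem⟩
  | imp A B ihA ihB =>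
    exact (imp_congr (ihA f) (ihB f)).trans Ultrafilter.eventually_imp.symm
  | box A ih =>
    calc Truth (UProdRel R U) (UProdVal V U) (UProd.mk f) A.box
        ↔ ∀ g : ∀ i, X i,
            (∀ᶠ i in U, R i (f i) (g i)) → ∀ᶠ i in U, Truth (R i) (V i) (g i) A := by
          simp only [Truth, UProd.forall_mk, UProdRel_mk_mk, ih]
          exact Iff.rfl
      _ ↔ ∀ g : ∀ i, X i, ∀ᶠ i in U, R i (f i) (g i) → Truth (R i) (V i) (g i) A := by
          exact forall_congr' fun g => Ultrafilter.eventually_imp.symm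
      _ ↔ {i | Truth (R i) (V i) (f i) A.box} ∈ U :=
          Filter.forall_eventually_iff_eventually_forall (U : Filter I)
            (fun i x => R i (f i) x → Truth (R i) (V i) x A)
end

section
/- If θ : A → A' is a modal algebra homomorphism, then the dual map f_θ : Cf A' → Cf A sending an ultrafilter F of A' to θ⁻¹(F) is a bounded morphism between the canonical frames. -/
/-- An ultrafilter of a Boolean algebra: a proper filter that contains `a` or `aᶜ`
for every element `a` (equivalently, a maximal proper filter). -/
structure BUltrafilter (A : Type) [BooleanAlgebra A] : Type where
  carrier : Set A
  top_mem : ⊤ ∈ carrier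
  bot_not_mem : ⊥ ∉ carrier
  inf_mem : ∀ a b, a ∈ carrier → b ∈ carrier → a ⊓ b ∈ carrier
  mem_of_le : ∀ a b, a ∈ carrier → a ≤ b → b ∈ carrier
  mem_or_compl_mem : ∀ a, a ∈ carrier ∨ aᶜ ∈ carrier

/-- The relation of the canonical frame of a modal algebra `(A, l)`:
`F R G` iff `{a | l a ∈ F} ⊆ G`. -/
def CanRel {A : Type} [BooleanAlgebra A] (l : A → A) (F G : BUltrafilter A) : Prop :=
  ∀ a, l a ∈ F.carrier → a ∈ G.carrier

/-- `f` is a bounded morphism from `(X, R)` to `(X', R')`. -/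
def IsBoundedMorphism {X X' : Type} (R : X → X → Prop) (R' : X' → X' → Prop)
    (f : X → X') : Prop :=
  (∀ a b, R a b → R' (f a) (f b)) ∧ (∀ a c, R' (f a) c → ∃ b, R a b ∧ f b = c)

/-- The preimage of an ultrafilter under a Boolean algebra homomorphism is an
ultrafilter. -/
def preimUF {A A' : Type} [BooleanAlgebra A] [BooleanAlgebra A']
    (θ : BoundedLatticeHom A A') (F : BUltrafilter A') : BUltrafilter A where
  carrier := θ ⁻¹' F.carrier
  top_mem := by
    show θ ⊤ ∈ F.carrier
    rw [map_top]; exact F.top_mem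
  bot_not_mem := by
    intro h
    have h' : θ ⊥ ∈ F.carrier := h
    rw [map_bot] at h'
    exact F.bot_not_mem h'
  inf_mem := fun a b ha hb => by
    show θ (a ⊓ b) ∈ F.carrier
    rw [map_inf]; exact F.inf_mem _ _ ha hb
  mem_of_le := fun a b ha hab =>
    F.mem_of_le _ _ ha (OrderHomClass.mono θ hab)
  mem_or_compl_mem := fun a => by
    rcases F.mem_or_compl_mem (θ a) with h | h
    · exact Or.inl h
    · exact Or.inr (show θ aᶜ ∈ F.carrier by rwa [map_compl'])


lemma BUltrafilter.ext' {A : Type} [BooleanAlgebra A] {F G : BUltrafilter A}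
    (h : F.carrier = G.carrier) : F = G := by
  cases F; cases G; cases h; rfl

lemma exists_ultrafilter_extend {A : Type} [BooleanAlgebra A] (T : Set A)
    (hTop : ⊤ ∈ T) (hBot : ⊥ ∉ T)
    (hInf : ∀ a b, a ∈ T → b ∈ T → a ⊓ b ∈ T)
    (hUp : ∀ a b, a ∈ T → a ≤ b → b ∈ T) :
    ∃ G : BUltrafilter A, T ⊆ G.carrier := by
  set S : Set (Set A) := {U | T ⊆ U ∧ ⊥ ∉ U ∧ (∀ a b, a ∈ U → b ∈ U → a ⊓ b ∈ U) ∧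
    (∀ a b, a ∈ U → a ≤ b → b ∈ U)} with hSdef
  have hub : ∀ c ⊆ S, IsChain (· ⊆ ·) c → c.Nonempty → ∃ ub ∈ S, ∀ s ∈ c, s ⊆ ub := by
    intro c hcS hchain hcne
    refine ⟨⋃₀ c, ⟨?_, ?_, ?_, ?_⟩, fun s hs => Set.subset_sUnion_of_mem hs⟩
    · obtain ⟨s, hs⟩ := hcne
      exact (hcS hs).1.trans (Set.subset_sUnion_of_mem hs)
    · rintro ⟨s, hs, hbot⟩
      exact (hcS hs).2.1 hbot
    · rintro a b ⟨s, hs, ha⟩ ⟨t, ht, hb⟩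
      rcases hchain.total hs ht with h | h
      · exact ⟨t, ht, (hcS ht).2.2.1 a b (h ha) hb⟩
      · exact ⟨s, hs, (hcS hs).2.2.1 a b ha (h hb)⟩
    · rintro a b ⟨s, hs, ha⟩ hab
      exact ⟨s, hs, (hcS hs).2.2.2 a b ha hab⟩
  obtain ⟨m, hTm, hmS, hmax⟩ := zorn_subset_nonempty S hub T ⟨subset_rfl, hBot, hInf, hUp⟩
  obtain ⟨hTm', hmbot, hminf, hmup⟩ := hmS
  refine ⟨⟨m, hTm hTop, hmbot, hminf, hmup, ?_⟩, hTm⟩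
  intro a
  by_contra hcon
  push_neg at hcon
  obtain ⟨ha, hac⟩ := hcon
  set m' : Set A := {x | ∃ g ∈ m, g ⊓ a ≤ x} with hm'def
  have hm'S : m' ∈ S := by
    refine ⟨fun x hx => ⟨x, hTm hx, inf_le_left⟩, ?_, ?_, ?_⟩
    · rintro ⟨g, hg, hle⟩
      have hgle : g ≤ aᶜ := le_compl_iff_disjoint_right.mpr (disjoint_iff_inf_le.mpr hle)
      exact hac (hmup g aᶜ hg hgle)
    · rintro x y ⟨g, hg, h1⟩ ⟨g', hg', h2⟩
      exact ⟨g ⊓ g', hminf _ _ hg hg',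
        le_inf (((inf_le_inf inf_le_left le_rfl)).trans h1)
          (((inf_le_inf inf_le_right le_rfl)).trans h2)⟩
    · rintro x y ⟨g, hg, h1⟩ hxy
      exact ⟨g, hg, h1.trans hxy⟩
  have hmm' : m ⊆ m' := fun g hg => ⟨g, hg, inf_le_left⟩
  have : a ∈ m := hmax hm'S hmm' ⟨⊤, hTm hTop, by simpa using inf_le_right⟩
  exact ha this

/-- If `θ : (A, l) → (A', l')` is a modal algebra homomorphism, then the dual
map `F ↦ θ⁻¹(F)` is a bounded morphism from the canonical frame of `A'` to the
canonical frame of `A`. -/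
theorem dual_of_modal_hom_is_bounded_morphism {A A' : Type}
    [BooleanAlgebra A] [BooleanAlgebra A'] (l : A → A) (l' : A' → A')
    (hl_top : l ⊤ = ⊤) (hl_inf : ∀ a b, l (a ⊓ b) = l a ⊓ l b)
    (hl'_top : l' ⊤ = ⊤) (hl'_inf : ∀ a b, l' (a ⊓ b) = l' a ⊓ l' b)
    (θ : BoundedLatticeHom A A') (hθ : ∀ a, θ (l a) = l' (θ a)) :
    IsBoundedMorphism (CanRel l') (CanRel l) (preimUF θ) := by
  
  have hl'mono : ∀ b c : A', b ≤ c → l' b ≤ l' c := by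
    intro b c hbc
    have h1 : b ⊓ c = b := inf_eq_left.mpr hbc
    calc l' b = l' (b ⊓ c) := by rw [h1]
    _ = l' b ⊓ l' c := hl'_inf b c
    _ ≤ l' c := inf_le_right
  constructor
  · intro F G h a ha
    have : l' (θ a) ∈ F.carrier := by rw [← hθ]; exact ha
    exact h (θ a) this
  · intro F H h
    set T : Set A' := {x | ∃ a ∈ H.carrier, ∃ b, l' b ∈ F.carrier ∧ θ a ⊓ b ≤ x} with hTdef
    have hl'F_top : l' ⊤ ∈ F.carrier := by rw [hl'_top]; exact F.top_mem
    obtain ⟨G, hTG⟩ := exists_ultrafilter_extend T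
      ⟨⊤, H.top_mem, ⊤, hl'F_top, le_top⟩
      (by
        rintro ⟨a, haH, b, hbF, hle⟩
        have hb : b ≤ (θ a)ᶜ :=
          le_compl_iff_disjoint_right.mpr (disjoint_iff_inf_le.mpr (by
            calc b ⊓ θ a = θ a ⊓ b := inf_comm b (θ a)
            _ ≤ ⊥ := hle))
        have hb' : b ≤ θ aᶜ := by rw [map_compl']; exact hb
        have : l' (θ aᶜ) ∈ F.carrier := F.mem_of_le _ _ hbF (hl'mono _ _ hb')
        have hlac : l (aᶜ) ∈ (preimUF θ F).carrier := by
          show θ (l aᶜ) ∈ F.carrier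
          rw [hθ]; exact this
        have hacH : aᶜ ∈ H.carrier := h _ hlac
        have : a ⊓ aᶜ ∈ H.carrier := H.inf_mem _ _ haH hacH
        rw [inf_compl_eq_bot] at this
        exact H.bot_not_mem this)
      (by
        rintro x y ⟨a, haH, b, hbF, h1⟩ ⟨a', haH', b', hbF', h2⟩
        refine ⟨a ⊓ a', H.inf_mem _ _ haH haH', b ⊓ b', ?_, ?_⟩
        · rw [hl'_inf]; exact F.inf_mem _ _ hbF hbF'
        · rw [map_inf]
          refine le_inf (le_trans ?_ h1) (le_trans ?_ h2)
          · exact inf_le_inf inf_le_left inf_le_left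
          · exact inf_le_inf inf_le_right inf_le_right)
      (by
        rintro x y ⟨a, haH, b, hbF, h1⟩ hxy
        exact ⟨a, haH, b, hbF, h1.trans hxy⟩)
    refine ⟨G, ?_, ?_⟩
    · intro b hb
      exact hTG ⟨⊤, H.top_mem, b, hb, by simpa using inf_le_right⟩
    · apply BUltrafilter.ext'
      ext x
      constructor
      · intro hx
        by_contra hxH
        have hxcH : xᶜ ∈ H.carrier := (H.mem_or_compl_mem x).resolve_left hxH
        have hxcG : θ xᶜ ∈ G.carrier :=
          hTG ⟨xᶜ, hxcH, ⊤, hl'F_top, inf_le_left⟩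
        have : θ x ⊓ θ xᶜ ∈ G.carrier := G.inf_mem _ _ hx hxcG
        rw [map_compl', inf_compl_eq_bot] at this
        exact G.bot_not_mem this
      · intro hx
        exact hTG ⟨x, hx, ⊤, hl'F_top, inf_le_left⟩
end

section
/- The map a ↦ {F : a ∈ F}, from a modal algebra A into the complex algebra of its canonical frame, is an injective modal algebra homomorphism (the Jónsson–Tarski representation). -/
/-- The box operator `l_R` of the complex algebra of a frame `(X, R)`. -/
def boxOp {X : Type} (R : X → X → Prop) (Y : Set X) : Set X :=
  {x | ∀ y, R x y → y ∈ Y}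

/-- The Stone map `a ↦ {F | a ∈ F}` of a Boolean algebra into the powerset of
its set of ultrafilters. -/
def stoneMap {A : Type} [BooleanAlgebra A] (a : A) : Set (BUltrafilter A) :=
  {F | a ∈ F.carrier}

/-- A proper filter, as a predicate on sets. -/
def IsPF {A : Type} [BooleanAlgebra A] (S : Set A) : Prop :=
  ⊤ ∈ S ∧ ⊥ ∉ S ∧ (∀ a b, a ∈ S → b ∈ S → a ⊓ b ∈ S) ∧ (∀ a b, a ∈ S → a ≤ b → b ∈ S)

/-- The ultrafilter lemma: every proper filter of a Boolean algebra extends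
to an ultrafilter. -/
theorem exists_bultrafilter {A : Type} [BooleanAlgebra A] (S : Set A) (hS : IsPF S) :
    ∃ G : BUltrafilter A, S ⊆ G.carrier := by
  obtain ⟨M, hSM, hMmax⟩ := zorn_subset_nonempty {T | IsPF T}
    (fun c hc hchain hcne => by
      obtain ⟨t0, ht0⟩ := hcne
      refine ⟨⋃₀ c, ⟨⟨t0, ht0, (hc ht0).1⟩, ?_, ?_, ?_⟩, fun s hs => Set.subset_sUnion_of_mem hs⟩
      · rintro ⟨t, ht, hbot⟩; exact (hc ht).2.1 hbot
      · rintro a b ⟨t, ht, hat⟩ ⟨u, hu, hbu⟩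
        rcases hchain.total ht hu with h | h
        · exact ⟨u, hu, (hc hu).2.2.1 a b (h hat) hbu⟩
        · exact ⟨t, ht, (hc ht).2.2.1 a b hat (h hbu)⟩
      · rintro a b ⟨t, ht, hat⟩ hab; exact ⟨t, ht, (hc ht).2.2.2 a b hat hab⟩) S hS
  obtain ⟨htop, hbot, hinf, hle⟩ := hMmax.prop
  refine ⟨⟨M, htop, hbot, hinf, hle, fun a => ?_⟩, hSM⟩
  by_contra hcon
  push_neg at hcon
  obtain ⟨ha, hac⟩ := hcon
  -- Extend M by a
  set M' : Set A := {x | ∃ m ∈ M, m ⊓ a ≤ x} with hM'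
  have hMM' : M ⊆ M' := fun m hm => ⟨m, hm, inf_le_left⟩
  have hPF : IsPF M' := by
    refine ⟨hMM' htop, ?_, ?_, ?_⟩
    · rintro ⟨m, hm, hmb⟩
      exact hac (hle m aᶜ hm (le_compl_iff_disjoint_right.2 (disjoint_iff.2 (le_bot_iff.1 hmb))))
    · rintro x y ⟨m, hm, hmx⟩ ⟨n, hn, hny⟩
      exact ⟨m ⊓ n, hinf m n hm hn,
        le_inf (le_trans (inf_le_inf_right a inf_le_left) hmx)
               (le_trans (inf_le_inf_right a inf_le_right) hny)⟩
    · rintro x y ⟨m, hm, hmx⟩ hxy; exact ⟨m, hm, hmx.trans hxy⟩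
  have := hMmax.eq_of_subset hPF hMM'
  exact ha (this ▸ ⟨⊤, htop, by simp⟩)

/-- The Jónsson–Tarski representation: the Stone map is an injective modal
algebra homomorphism from a modal algebra `(A, l)` into the complex algebra of
its canonical frame. -/
theorem jonsson_tarski_representation {A : Type} [BooleanAlgebra A] (l : A → A)
    (hl_top : l ⊤ = ⊤) (hl_inf : ∀ a b, l (a ⊓ b) = l a ⊓ l b) :
    Function.Injective (stoneMap (A := A)) ∧
    stoneMap (⊤ : A) = (⊤ : Set (BUltrafilter A)) ∧
    stoneMap (⊥ : A) = (⊥ : Set (BUltrafilter A)) ∧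
    (∀ a b : A, stoneMap (a ⊓ b) = stoneMap a ⊓ stoneMap b) ∧
    (∀ a b : A, stoneMap (a ⊔ b) = stoneMap a ⊔ stoneMap b) ∧
    (∀ a : A, stoneMap aᶜ = (stoneMap a)ᶜ) ∧
    (∀ a : A, stoneMap (l a) = boxOp (CanRel l) (stoneMap a)) := by
  have hl_mono : ∀ a b : A, a ≤ b → l a ≤ l b := fun a b hab => by
    have : l (a ⊓ b) = l a ⊓ l b := hl_inf a b
    rw [inf_eq_left.2 hab] at this
    exact inf_eq_left.1 this.symm
  -- key separation lemma
  have hsep : ∀ a b : A, ¬ a ≤ b → ∃ F : BUltrafilter A, a ∈ F.carrier ∧ b ∉ F.carrier := by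
    intro a b hab
    have hne : a ⊓ bᶜ ≠ ⊥ := by
      intro h
      exact hab (sdiff_eq_bot_iff.1 (by rw [sdiff_eq]; exact h))
    obtain ⟨F, hF⟩ := exists_bultrafilter {x | a ⊓ bᶜ ≤ x}
      ⟨le_top, fun h => hne (le_bot_iff.1 h), fun x y hx hy => le_inf hx hy,
        fun x y hx hxy => hx.trans hxy⟩
    refine ⟨F, F.mem_of_le _ _ (hF inf_le_left) le_rfl, fun hb => ?_⟩
    exact F.bot_not_mem (by simpa using F.inf_mem _ _ hb (hF inf_le_right))
  have hcompl : ∀ (F : BUltrafilter A) (a : A), aᶜ ∈ F.carrier ↔ a ∉ F.carrier := by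
    intro F a
    constructor
    · intro hc ha
      exact F.bot_not_mem (by simpa using F.inf_mem _ _ ha hc)
    · intro ha
      rcases F.mem_or_compl_mem a with h | h
      · exact absurd h ha
      · exact h
  refine ⟨?_, ?_, ?_, ?_, ?_, ?_, ?_⟩
  · intro a b hab
    by_contra hne
    rcases (not_and_or.1 fun h : a ≤ b ∧ b ≤ a => hne (le_antisymm h.1 h.2)) with h | h
    · obtain ⟨F, haF, hbF⟩ := hsep a b h
      have : F ∈ stoneMap a := haF
      rw [hab] at this
      exact hbF this
    · obtain ⟨F, hbF, haF⟩ := hsep b a h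
      have : F ∈ stoneMap b := hbF
      rw [← hab] at this
      exact haF this
  · ext F; simp [stoneMap, F.top_mem]
  · ext F; simp [stoneMap, F.bot_not_mem]
  · intro a b
    ext F
    simp only [stoneMap, Set.mem_setOf_eq, Set.inf_eq_inter, Set.mem_inter_iff]
    exact ⟨fun h => ⟨F.mem_of_le _ _ h inf_le_left, F.mem_of_le _ _ h inf_le_right⟩,
      fun ⟨h1, h2⟩ => F.inf_mem _ _ h1 h2⟩
  · intro a b
    ext F
    simp only [stoneMap, Set.mem_setOf_eq, Set.sup_eq_union, Set.mem_union]
    constructor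
    · intro h
      by_contra hcon
      push_neg at hcon
      have h1 := (hcompl F a).2 hcon.1
      have h2 := (hcompl F b).2 hcon.2
      have := F.inf_mem _ _ (F.inf_mem _ _ h1 h2) h
      rw [← compl_sup, compl_inf_self] at this
      exact F.bot_not_mem this
    · rintro (h | h)
      · exact F.mem_of_le _ _ h le_sup_left
      · exact F.mem_of_le _ _ h le_sup_right
  · intro a
    ext F
    simpa [stoneMap] using hcompl F a
  · intro a
    ext F
    simp only [stoneMap, boxOp, Set.mem_setOf_eq]
    constructor
    · intro h G hFG
      exact hFG a h
    · intro h
      by_contra hla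
      -- build ultrafilter G containing {c | l c ∈ F} and aᶜ
      set S : Set A := {x | ∃ c, l c ∈ F.carrier ∧ c ⊓ aᶜ ≤ x} with hSdef
      have hPF : IsPF S := by
        refine ⟨⟨⊤, by rw [hl_top]; exact F.top_mem, le_top⟩, ?_, ?_, ?_⟩
        · rintro ⟨c, hc, hbot⟩
          have hca : c ≤ a := by
            have := le_bot_iff.1 hbot
            exact sdiff_eq_bot_iff.1 (by rw [sdiff_eq]; exact this)
          exact hla (F.mem_of_le _ _ hc (hl_mono _ _ hca))
        · rintro x y ⟨c, hc, hcx⟩ ⟨d, hd, hdy⟩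
          refine ⟨c ⊓ d, by rw [hl_inf]; exact F.inf_mem _ _ hc hd, le_inf ?_ ?_⟩
          · exact le_trans (inf_le_inf_right aᶜ inf_le_left) hcx
          · exact le_trans (inf_le_inf_right aᶜ inf_le_right) hdy
        · rintro x y ⟨c, hc, hcx⟩ hxy; exact ⟨c, hc, hcx.trans hxy⟩
      obtain ⟨G, hG⟩ := exists_bultrafilter S hPF
      have hFG : CanRel l F G := fun c hc => hG ⟨c, hc, inf_le_left⟩
      have haG : aᶜ ∈ G.carrier := hG ⟨⊤, by rw [hl_top]; exact F.top_mem, inf_le_right⟩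
      exact ((hcompl G a).1 haG) (h G hFG)
end

section
/- For any modal algebra A and set I, the canonical frame Cf(A^I) of the direct power A^I is isomorphic to the disjoint union, over all ultrafilters U on I, of the canonical frames Cf(A^U) of the ultrapowers A^U. -/
noncomputable instance germBooleanAlgebra {I : Type} (l : Filter I) (A : Type)
    [BooleanAlgebra A] : BooleanAlgebra (Filter.Germ l A) where
  __ := (inferInstance : DistribLattice (Filter.Germ l A))
  __ := (inferInstance : BoundedOrder (Filter.Germ l A))
  compl := Filter.Germ.map compl
  inf_compl_le_bot := fun x => Filter.Germ.inductionOn x fun f => by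
    change ((f : Filter.Germ l A) ⊓ Filter.Germ.map compl (f : Filter.Germ l A)) ≤ ⊥
    rw [Filter.Germ.map_coe, ← Filter.Germ.const_bot (l := l) (β := A)]
    change ((↑(fun i => f i ⊓ (f i)ᶜ) : Filter.Germ l A)) ≤ _
    exact Filter.Germ.coe_le.mpr (Filter.Eventually.of_forall fun i => by simp)
  top_le_sup_compl := fun x => Filter.Germ.inductionOn x fun f => by
    change ⊤ ≤ ((f : Filter.Germ l A) ⊔ Filter.Germ.map compl (f : Filter.Germ l A))
    rw [Filter.Germ.map_coe, ← Filter.Germ.const_top (l := l) (β := A)]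
    change _ ≤ ((↑(fun i => f i ⊔ (f i)ᶜ) : Filter.Germ l A))
    exact Filter.Germ.coe_le.mpr (Filter.Eventually.of_forall fun i => by simp)

/-- The relation on the disjoint union `Σ i, X i` of a family of frames:
`(i, a)` is related to `(j, b)` iff `i = j` and `a R_i b`. -/
def DisjointUnionRel {I : Type} {X : I → Type} (R : ∀ i, X i → X i → Prop) :
    (Σ i, X i) → (Σ i, X i) → Prop :=
  fun x y => ∃ h : y.1 = x.1, R x.1 x.2 (h ▸ y.2)

/- ### Auxiliary machinery -/

namespace CFUP

open Filter

variable {A I : Type} [BooleanAlgebra A]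

open scoped Classical in
/-- The characteristic element of a subset `J ⊆ I` in the power algebra `A^I`. -/
noncomputable def chi (A : Type) [BooleanAlgebra A] {I : Type} (J : Set I) : I → A :=
  fun i => if i ∈ J then ⊤ else ⊥

lemma chi_univ : chi A (Set.univ : Set I) = ⊤ := by
  funext i; simp [chi]

lemma chi_empty : chi A (∅ : Set I) = ⊥ := by
  funext i; simp [chi]

lemma chi_inf (J K : Set I) : chi A (J ∩ K) = chi A J ⊓ chi A K := by
  classical
  funext i
  by_cases hJ : i ∈ J <;> by_cases hK : i ∈ K <;>
    simp [chi, hJ, hK]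

lemma chi_mono {J K : Set I} (h : J ⊆ K) : chi A J ≤ chi A K := by
  intro i
  by_cases hJ : i ∈ J
  · simp [chi, hJ, h hJ]
  · simp [chi, hJ]

lemma chi_compl (J : Set I) : (chi A J)ᶜ = chi A Jᶜ := by
  funext i
  by_cases hJ : i ∈ J <;> simp [chi, hJ]

/-- The ultrafilter on `I` associated with an ultrafilter of the power algebra `A^I`. -/
noncomputable def UFof (F : BUltrafilter (I → A)) : Ultrafilter I :=
  Ultrafilter.ofComplNotMemIff
    { sets := {J : Set I | chi A J ∈ F.carrier}
      univ_sets := by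
        show chi A Set.univ ∈ F.carrier
        rw [chi_univ]; exact F.top_mem
      sets_of_superset := fun hJ hJK => F.mem_of_le _ _ hJ (chi_mono hJK)
      inter_sets := fun hJ hK => by
        show chi A _ ∈ F.carrier
        rw [chi_inf]
        exact F.inf_mem _ _ hJ hK }
    (by
      intro s
      constructor
      · intro h
        rcases F.mem_or_compl_mem (chi A s) with h' | h'
        · exact h'
        · rw [chi_compl] at h'
          exact absurd h' h
      · intro hs hsc
        have h1 : chi A s ⊓ chi A sᶜ ∈ F.carrier := F.inf_mem _ _ hs hsc
        rw [← chi_inf, Set.inter_compl_self, chi_empty] at h1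
        exact F.bot_not_mem h1)

lemma mem_UFof {F : BUltrafilter (I → A)} {J : Set I} :
    J ∈ UFof F ↔ chi A J ∈ F.carrier := Iff.rfl

lemma mem_of_eventuallyLE (F : BUltrafilter (I → A)) {f g : I → A}
    (hf : f ∈ F.carrier) (h : {i | f i ≤ g i} ∈ UFof F) : g ∈ F.carrier := by
  have hchi : chi A {i | f i ≤ g i} ∈ F.carrier := h
  refine F.mem_of_le _ _ (F.inf_mem _ _ hf hchi) ?_
  intro i
  by_cases hi : f i ≤ g i
  · have : i ∈ {i | f i ≤ g i} := hi
    simpa [chi, this] using hi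
  · have : i ∉ {i | f i ≤ g i} := hi
    simp [chi, this]

lemma mem_of_germ_eq (F : BUltrafilter (I → A)) {f g : I → A}
    (hf : f ∈ F.carrier)
    (h : (↑f : Germ (UFof F : Filter I) A) = ↑g) : g ∈ F.carrier := by
  apply mem_of_eventuallyLE F hf
  exact (Germ.coe_eq.mp h).mono fun i hi => le_of_eq hi

/-- Pushing an ultrafilter of `A^I` forward to the ultrapower `A^(UFof F)`. -/
noncomputable def pushUF (F : BUltrafilter (I → A)) :
    BUltrafilter (Germ (UFof F : Filter I) A) where
  carrier := {x | ∃ f, f ∈ F.carrier ∧ (↑f : Germ (UFof F : Filter I) A) = x}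
  top_mem := ⟨⊤, F.top_mem, Germ.const_top⟩
  bot_not_mem := by
    rintro ⟨f, hf, hcoe⟩
    have h2 : (↑f : Germ (UFof F : Filter I) A) = ↑(⊥ : I → A) := by
      rw [hcoe]; exact Germ.const_bot.symm
    exact F.bot_not_mem (mem_of_germ_eq F hf h2)
  inf_mem := by
    rintro x y ⟨f, hf, rfl⟩ ⟨g, hg, rfl⟩
    exact ⟨f ⊓ g, F.inf_mem _ _ hf hg, rfl⟩
  mem_of_le := by
    intro x y hx hxy
    obtain ⟨f, hf, rfl⟩ := hx
    revert hxy
    induction y using Filter.Germ.inductionOn with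
    | h g =>
      intro hxy
      exact ⟨g, mem_of_eventuallyLE F hf
        ((Germ.coe_le.mp hxy).mono fun i hi => hi), rfl⟩
  mem_or_compl_mem := by
    intro x
    induction x using Filter.Germ.inductionOn with
    | h f =>
      rcases F.mem_or_compl_mem f with h | h
      · exact Or.inl ⟨f, h, rfl⟩
      · refine Or.inr ⟨fᶜ, h, ?_⟩
        show (↑(fᶜ) : Germ (UFof F : Filter I) A) = Germ.map compl ↑f
        rw [Germ.map_coe]
        rfl

lemma mem_pushUF (F : BUltrafilter (I → A)) (f : I → A) :
    (↑f : Germ (UFof F : Filter I) A) ∈ (pushUF F).carrier ↔ f ∈ F.carrier := by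
  constructor
  · rintro ⟨g, hg, hgf⟩
    exact mem_of_germ_eq F hg hgf
  · intro hf
    exact ⟨f, hf, rfl⟩

/-- Pulling an ultrafilter of the ultrapower `A^u` back to `A^I`. -/
def pullUF (u : Ultrafilter I) (G : BUltrafilter (Germ (u : Filter I) A)) :
    BUltrafilter (I → A) where
  carrier := {f | (↑f : Germ (u : Filter I) A) ∈ G.carrier}
  top_mem := by
    show (↑(⊤ : I → A) : Germ (u : Filter I) A) ∈ G.carrier
    rw [show (↑(⊤ : I → A) : Germ (u : Filter I) A) = ⊤ from Germ.const_top]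
    exact G.top_mem
  bot_not_mem := by
    intro h
    have h2 : (↑(⊥ : I → A) : Germ (u : Filter I) A) ∈ G.carrier := h
    rw [show (↑(⊥ : I → A) : Germ (u : Filter I) A) = ⊥ from Germ.const_bot] at h2
    exact G.bot_not_mem h2
  inf_mem := fun f g hf hg => G.inf_mem _ _ hf hg
  mem_of_le := fun f g hf hfg =>
    G.mem_of_le _ _ hf (Germ.coe_le.mpr (Filter.Eventually.of_forall fun i => hfg i))
  mem_or_compl_mem := by
    intro f
    rcases G.mem_or_compl_mem ↑f with h | h
    · exact Or.inl h
    · right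
      show (↑(fᶜ) : Germ (u : Filter I) A) ∈ G.carrier
      have : (↑(fᶜ) : Germ (u : Filter I) A) = Germ.map compl ↑f := by
        rw [Germ.map_coe]; rfl
      rw [this]
      exact h

lemma BUltrafilter.ext' {A : Type} [BooleanAlgebra A] {F G : BUltrafilter A}
    (h : F.carrier = G.carrier) : F = G := by
  cases F; cases G; cases h; rfl

lemma UFof_pullUF (u : Ultrafilter I) (G : BUltrafilter (Germ (u : Filter I) A)) :
    UFof (pullUF u G) = u := by
  apply Ultrafilter.coe_injective
  apply Filter.ext
  intro J
  show chi A J ∈ (pullUF u G).carrier ↔ J ∈ u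
  show (↑(chi A J) : Germ (u : Filter I) A) ∈ G.carrier ↔ J ∈ u
  constructor
  · intro h
    by_contra hJ
    have hJc : Jᶜ ∈ u := Ultrafilter.compl_mem_iff_notMem.mpr hJ
    have hbot : (↑(chi A J) : Germ (u : Filter I) A) = ⊥ := by
      rw [show (⊥ : Germ (u : Filter I) A) = ↑(⊥ : I → A) from Germ.const_bot.symm]
      apply Germ.coe_eq.mpr
      filter_upwards [hJc] with i hi
      have hi' : i ∉ J := hi
      simp [chi, hi']
    rw [hbot] at h
    exact G.bot_not_mem h
  · intro hJ
    have htop : (↑(chi A J) : Germ (u : Filter I) A) = ⊤ := by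
      rw [show (⊤ : Germ (u : Filter I) A) = ↑(⊤ : I → A) from Germ.const_top.symm]
      apply Germ.coe_eq.mpr
      filter_upwards [hJ] with i hi
      simp [chi, hi]
    rw [htop]
    exact G.top_mem

lemma bult_heq {u v : Ultrafilter I} (h : u = v)
    (G₁ : BUltrafilter (Germ (u : Filter I) A))
    (G₂ : BUltrafilter (Germ (v : Filter I) A))
    (hc : ∀ f : I → A, ((↑f : Germ (u : Filter I) A) ∈ G₁.carrier ↔
      (↑f : Germ (v : Filter I) A) ∈ G₂.carrier)) : HEq G₁ G₂ := by
  subst h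
  refine heq_of_eq (BUltrafilter.ext' ?_)
  ext x
  induction x using Filter.Germ.inductionOn with
  | h f => exact hc f

lemma duRel_iff (l : A → A) {u v : Ultrafilter I}
    (F' : BUltrafilter (Germ (u : Filter I) A))
    (G' : BUltrafilter (Germ (v : Filter I) A)) :
    DisjointUnionRel (fun U : Ultrafilter I =>
        CanRel (Filter.Germ.map l) (A := Germ (U : Filter I) A)) ⟨u, F'⟩ ⟨v, G'⟩ ↔
      (v = u ∧ ∀ f : I → A, Filter.Germ.map l ↑f ∈ F'.carrier →
        (↑f : Germ (v : Filter I) A) ∈ G'.carrier) := by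
  constructor
  · rintro ⟨h, hR⟩
    have h' : v = u := h
    subst h'
    exact ⟨rfl, fun f hf => hR _ hf⟩
  · rintro ⟨h, hR⟩
    subst h
    refine ⟨rfl, ?_⟩
    intro x
    induction x using Filter.Germ.inductionOn with
    | h f => exact hR f

end CFUP

open CFUP Filter in
/-- For any modal algebra `(A, l)` and set `I`, the canonical frame of the
direct power `A^I` is isomorphic to the disjoint union, over all ultrafilters
`U` on `I`, of the canonical frames of the ultrapowers `A^U`. -/
theorem canonical_frame_of_power_iso_disjoint_union_of_ultrapowers
    {A I : Type} [BooleanAlgebra A] (l : A → A)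
    (hl_top : l ⊤ = ⊤) (hl_inf : ∀ a b, l (a ⊓ b) = l a ⊓ l b) :
    ∃ e : BUltrafilter (I → A) ≃
        Σ U : Ultrafilter I, BUltrafilter (Filter.Germ (U : Filter I) A),
      ∀ F G : BUltrafilter (I → A),
        CanRel (fun f i => l (f i)) F G ↔
          DisjointUnionRel (fun U : Ultrafilter I =>
            CanRel (Filter.Germ.map l)) (e F) (e G) := by
  classical
  refine ⟨⟨fun F => ⟨UFof F, pushUF F⟩, fun p => pullUF p.1 p.2, ?_, ?_⟩, ?_⟩
  · -- left inverse
    intro F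
    apply CFUP.BUltrafilter.ext'
    ext f
    constructor
    · rintro ⟨g, hg, hgf⟩
      exact mem_of_germ_eq F hg hgf
    · intro hf
      exact ⟨f, hf, rfl⟩
  · -- right inverse
    rintro ⟨u, G⟩
    have h1 : UFof (pullUF u G) = u := UFof_pullUF u G
    refine Sigma.ext h1 ?_
    apply bult_heq h1
    intro f
    show (↑f : Germ _ A) ∈ (pushUF (pullUF u G)).carrier ↔ _
    rw [mem_pushUF]
    exact Iff.rfl
  · -- the relation condition
    intro F G
    have key : CanRel (fun f i => l (f i)) F G ↔
        (UFof G = UFof F ∧ ∀ f : I → A,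
          Filter.Germ.map l ↑f ∈ (pushUF F).carrier →
          (↑f : Germ ((UFof G : Ultrafilter I) : Filter I) A) ∈ (pushUF G).carrier) := by
      constructor
      · intro hCan
        have hsub : ∀ J : Set I, J ∈ UFof F → J ∈ UFof G := by
          intro J hJ
          have hle : chi A J ≤ fun i => l (chi A J i) := by
            intro i
            by_cases hi : i ∈ J
            · simp [chi, hi, hl_top]
            · simp [chi, hi]
          exact hCan (chi A J) (F.mem_of_le _ _ hJ hle)
        have hU : UFof G = UFof F := by
          apply Ultrafilter.coe_injective
          apply Filter.ext
          intro J
          constructor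
          · intro hJ
            by_contra hJF
            have h2 : Jᶜ ∈ UFof F := Ultrafilter.compl_mem_iff_notMem.mpr hJF
            have h3 : Jᶜ ∈ UFof G := hsub _ h2
            exact Ultrafilter.compl_mem_iff_notMem.mp h3 hJ
          · exact hsub J
        refine ⟨hU, ?_⟩
        intro f hf
        rw [Germ.map_coe] at hf
        exact (mem_pushUF G f).mpr (hCan f ((mem_pushUF F _).mp hf))
      · rintro ⟨hU, hR⟩
        intro a ha
        have h2 : Filter.Germ.map l ↑a ∈ (pushUF F).carrier := by
          rw [Germ.map_coe]
          exact (mem_pushUF F _).mpr ha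
        exact (mem_pushUF G a).mp (hR a h2)
    exact key.trans (duRel_iff l (pushUF F) (pushUF G)).symm
end

section
/- For any modal algebra A, set I, and ultrafilter U on I, the map sending g_U ∈ (Cf A)^U to the set {h_U ∈ A^U : {i ∈ I : h(i) ∈ g(i)} ∈ U} is a well-defined injection from the ultrapower of the canonical frame of A into the canonical frame of the ultrapower of A, whose values are ultrafilters of A^U; moreover it is a frame embedding onto a subframe (it preserves and reflects the frame relation). -/
namespace UltraCfEmbed

variable {A I : Type} [BooleanAlgebra A] (U : Ultrafilter I)

theorem BUltrafilter.ext' {B : Type} [BooleanAlgebra B] {F G : BUltrafilter B}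
    (h : F.carrier = G.carrier) : F = G := by
  cases F; cases G; cases h; rfl

/-- membership condition on a germ, lifted. -/
def cond (g : I → BUltrafilter A) (x : Filter.Germ (U : Filter I) A) : Prop :=
  Quotient.liftOn' x (fun h => {i | h i ∈ (g i).carrier} ∈ U) (by
    intro h h' hh
    have hh' : {i | h i = h' i} ∈ U := hh
    refine propext ⟨fun hm => ?_, fun hm => ?_⟩ <;>
      refine Filter.mem_of_superset (Filter.inter_mem hm hh') fun i hi => ?_ <;>
      obtain ⟨h1, h2⟩ := hi <;>
      simp only [Set.mem_setOf_eq] at h1 h2 ⊢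
    · rw [← h2]; exact h1
    · rw [h2]; exact h1)

theorem cond_coe (g : I → BUltrafilter A) (h : I → A) :
    cond U g (↑h : Filter.Germ (U : Filter I) A) ↔ {i | h i ∈ (g i).carrier} ∈ U :=
  Iff.rfl

/-- The image ultrafilter on the Boolean ultrapower. -/
def eBU (g : I → BUltrafilter A) : BUltrafilter (Filter.Germ (U : Filter I) A) where
  carrier := {x | cond U g x}
  top_mem := by
    show cond U g ⊤
    rw [← Filter.Germ.const_top (l := (U : Filter I)) (β := A)]
    exact Filter.univ_mem' fun i => (g i).top_mem
  bot_not_mem := by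
    show ¬ cond U g ⊥
    rw [← Filter.Germ.const_bot (l := (U : Filter I)) (β := A)]
    intro h
    have h' : {i | (⊥ : A) ∈ (g i).carrier} ∈ (U : Filter I) := h
    obtain ⟨i, hi⟩ := Filter.nonempty_of_mem h'
    exact (g i).bot_not_mem hi
  inf_mem := fun x y => Filter.Germ.inductionOn₂ x y fun f f' hf hf' => by
    show cond U g ((↑f : Filter.Germ (U : Filter I) A) ⊓ ↑f')
    have he : ((↑f : Filter.Germ (U : Filter I) A) ⊓ ↑f') = ↑(fun i => f i ⊓ f' i) := rfl
    rw [he]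
    show {i | f i ⊓ f' i ∈ (g i).carrier} ∈ U
    have hf2 : {i | f i ∈ (g i).carrier} ∈ U := hf
    have hf2' : {i | f' i ∈ (g i).carrier} ∈ U := hf'
    exact Filter.mem_of_superset (Filter.inter_mem hf2 hf2') fun i hi =>
      (g i).inf_mem _ _ hi.1 hi.2
  mem_of_le := fun x y => Filter.Germ.inductionOn₂ x y fun f f' hf hle => by
    show {i | f' i ∈ (g i).carrier} ∈ U
    have hf2 : {i | f i ∈ (g i).carrier} ∈ U := hf
    have hle' : ∀ᶠ i in (U : Filter I), f i ≤ f' i := Filter.Germ.coe_le.mp hle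
    exact Filter.mem_of_superset (Filter.inter_mem hf2 hle') fun i hi =>
      (g i).mem_of_le _ _ hi.1 hi.2
  mem_or_compl_mem := fun x => Filter.Germ.inductionOn x fun f => by
    show cond U g ↑f ∨ cond U g ((↑f : Filter.Germ (U : Filter I) A)ᶜ)
    have hc : ((↑f : Filter.Germ (U : Filter I) A)ᶜ) = ↑(fun i => (f i)ᶜ) := rfl
    rw [hc]
    show ({i | f i ∈ (g i).carrier} ∈ U) ∨ ({i | (f i)ᶜ ∈ (g i).carrier} ∈ U)
    rcases Ultrafilter.mem_or_compl_mem U {i | f i ∈ (g i).carrier} with h | h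
    · exact Or.inl h
    · refine Or.inr (Filter.mem_of_superset h fun i hi => ?_)
      rcases (g i).mem_or_compl_mem (f i) with h' | h'
      · exact absurd h' hi
      · exact h'

theorem eBU_well (g g' : I → BUltrafilter A) (hgg : {i | g i = g' i} ∈ U) :
    eBU U g = eBU U g' := by
  refine BUltrafilter.ext' (Set.ext fun x => ?_)
  refine Filter.Germ.inductionOn x fun f => ?_
  show cond U g ↑f ↔ cond U g' ↑f
  rw [cond_coe, cond_coe]
  constructor <;> intro hm <;>
    refine Filter.mem_of_superset (Filter.inter_mem hm hgg) fun i hi => ?_ <;>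
    obtain ⟨h1, h2⟩ := hi <;>
    simp only [Set.mem_setOf_eq] at h1 h2 ⊢
  · rw [← h2]; exact h1
  · rw [h2]; exact h1

end UltraCfEmbed

/-- For a modal algebra `(A, l)` and an ultrafilter `U` on `I`, the map sending
`g_U` in the ultrapower `(Cf A)^U` of the canonical frame to the set
`{h_U ∈ A^U : {i | h i ∈ g i} ∈ U}` is a well-defined injection into the
canonical frame `Cf (A^U)` of the Boolean ultrapower, with ultrafilters as
values, and it preserves and reflects the frame relation (so `(Cf A)^U` is
isomorphic to a subframe of `Cf (A^U)`). -/
theorem ultrapower_canonical_frame_embeds {A I : Type} [BooleanAlgebra A]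
    (l : A → A) (hl_top : l ⊤ = ⊤) (hl_inf : ∀ a b, l (a ⊓ b) = l a ⊓ l b)
    (U : Ultrafilter I) :
    ∃ e : UProd (fun _ : I => BUltrafilter A) U →
        BUltrafilter (Filter.Germ (U : Filter I) A),
      (∀ (g : I → BUltrafilter A) (h : I → A),
        ((h : Filter.Germ (U : Filter I) A) ∈ (e (UProd.mk g)).carrier ↔
          {i | h i ∈ (g i).carrier} ∈ U)) ∧
      Function.Injective e ∧
      (∀ x y, UProdRel (fun _ : I => CanRel l) U x y ↔
        CanRel (Filter.Germ.map l) (e x) (e y)) := by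
  
  classical
  refine ⟨Quotient.lift (UltraCfEmbed.eBU U)
      (fun g g' hgg => UltraCfEmbed.eBU_well U g g' hgg), ?_, ?_, ?_⟩
  · intro g h
    exact Iff.rfl
  · -- injectivity
    intro x y hxy
    refine Quotient.inductionOn₂ x y (fun g g' hgg => ?_) hxy
    change UltraCfEmbed.eBU U g = UltraCfEmbed.eBU U g' at hgg
    refine Quotient.sound ?_
    show {i | g i = g' i} ∈ U
    by_contra hD
    have hDc : {i | g i = g' i}ᶜ ∈ U := Ultrafilter.compl_mem_iff_notMem.mpr hD
    -- If F.carrier ⊆ G.carrier then F = G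
    have sub_eq : ∀ F G : BUltrafilter A, F.carrier ⊆ G.carrier → F = G := by
      intro F G hsub
      refine UltraCfEmbed.BUltrafilter.ext' (Set.Subset.antisymm hsub fun a ha => ?_)
      rcases F.mem_or_compl_mem a with h' | h'
      · exact h'
      · exfalso
        have : a ⊓ aᶜ ∈ G.carrier := G.inf_mem _ _ ha (hsub h')
        rw [inf_compl_eq_bot] at this
        exact G.bot_not_mem this
    have hex : ∀ i, g i ≠ g' i → ∃ a, a ∈ (g i).carrier ∧ a ∉ (g' i).carrier := by
      intro i hne
      by_contra hno
      push_neg at hno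
      exact hne (sub_eq _ _ fun a ha => hno a ha)
    choose f hf using fun i (h : g i ≠ g' i) => hex i h
    set F : I → A := fun i => if h : g i ≠ g' i then f i h else ⊤ with hF
    have hmem : {i | F i ∈ (g i).carrier} ∈ U := by
      refine Filter.mem_of_superset hDc fun i hi => ?_
      have hne : g i ≠ g' i := hi
      show F i ∈ (g i).carrier
      rw [hF]; simp only [dif_pos hne]
      exact (hf i hne).1
    have hmem0 : (↑F : Filter.Germ (U : Filter I) A) ∈ (UltraCfEmbed.eBU U g).carrier := hmem
    rw [hgg] at hmem0
    have hmem : {i | F i ∈ (g' i).carrier} ∈ U := hmem0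
    have : ({i | F i ∈ (g' i).carrier} ∩ {i | g i = g' i}ᶜ : Set I) ∈ U :=
      Filter.inter_mem hmem hDc
    obtain ⟨i, hi1, hi2⟩ := Filter.nonempty_of_mem this
    have hne : g i ≠ g' i := hi2
    have : F i ∉ (g' i).carrier := by
      rw [hF]; simp only [dif_pos hne]; exact (hf i hne).2
    exact this hi1
  · -- relation
    intro x y
    refine Quotient.inductionOn₂ x y fun g h => ?_
    constructor
    · intro hrel
      have hD : {i | CanRel l (g i) (h i)} ∈ U := hrel
      intro z hz
      refine Filter.Germ.inductionOn z (fun f hf => ?_) hz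
      have hmap : Filter.Germ.map l (↑f : Filter.Germ (U : Filter I) A) = ↑(l ∘ f) :=
        Filter.Germ.map_coe l f
      rw [hmap] at hf
      have hf' : {i | l (f i) ∈ (g i).carrier} ∈ U := hf
      show {i | f i ∈ (h i).carrier} ∈ U
      exact Filter.mem_of_superset (Filter.inter_mem hf' hD) fun i hi =>
        hi.2 (f i) hi.1
    · intro hcan
      show {i | CanRel l (g i) (h i)} ∈ U
      by_contra hD
      have hDc : {i | CanRel l (g i) (h i)}ᶜ ∈ U :=
        Ultrafilter.compl_mem_iff_notMem.mpr hD
      have hex : ∀ i, ¬ CanRel l (g i) (h i) →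
          ∃ a, l a ∈ (g i).carrier ∧ a ∉ (h i).carrier := by
        intro i hne
        by_contra hno
        push_neg at hno
        exact hne fun a ha => hno a ha
      choose f hf using fun i (hi : ¬ CanRel l (g i) (h i)) => hex i hi
      set F : I → A := fun i => if hi : ¬ CanRel l (g i) (h i) then f i hi else ⊤ with hF
      have hmem : Filter.Germ.map l (↑F : Filter.Germ (U : Filter I) A) ∈
          (UltraCfEmbed.eBU U g).carrier := by
        rw [Filter.Germ.map_coe]
        show {i | l (F i) ∈ (g i).carrier} ∈ U
        refine Filter.mem_of_superset hDc fun i hi => ?_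
        have hne : ¬ CanRel l (g i) (h i) := hi
        show l (F i) ∈ (g i).carrier
        rw [hF]; simp only [dif_pos hne]
        exact (hf i hne).1
      have hmem2 := hcan _ hmem
      have hmem2' : {i | F i ∈ (h i).carrier} ∈ U := hmem2
      have : ({i | F i ∈ (h i).carrier} ∩ {i | CanRel l (g i) (h i)}ᶜ : Set I) ∈ U :=
        Filter.inter_mem hmem2' hDc
      obtain ⟨i, hi1, hi2⟩ := Filter.nonempty_of_mem this
      have hne : ¬ CanRel l (g i) (h i) := hi2
      have : F i ∉ (h i).carrier := by
        rw [hF]; simp only [dif_pos hne]; exact (hf i hne).2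
      exact this hi1
end
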